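/- For every γ > 0 there exists B₀ such that the following holds for every even integer B ≥ B₀. Let σ be a probability mass function on Fin B, let τ be a probability mass function on pair-selections, and let (s,t) be drawn from the product distribution σ × τ. Assume (i) Pr[s ∈ T(t)] ≤ 1/42, and (ii) the conditional entropy H(s | t), computed under σ × τ conditioned on the event s ∉ T(t), is at least (1 − γ)·log₂ B. Then σ assigns total mass at least 1/5 to the set S* = { x ∈ Fin B : σ(x) ≤ B^{7γ−1} }. -/

import Mathlib

open Finset

/-- `memT t x` : the element `x ∈ Fin B` belongs to the set `T(t)` determined by the
pair-selection `t : Fin (B/2) → Bool`, namely `T(t) = { 2k + (if t k then 1 else 0) }`. -/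
def memT {B : ℕ} (t : Fin (B / 2) → Bool) (x : Fin B) : Prop :=
  ∃ k : Fin (B / 2), (x : ℕ) = 2 * (k : ℕ) + (if t k then 1 else 0)

instance {B : ℕ} (t : Fin (B / 2) → Bool) (x : Fin B) : Decidable (memT t x) := by
  unfold memT; infer_instance

/-- The probability that `s ∈ T(t)` when `(s,t)` is drawn from the product `σ × τ`. -/
noncomputable def prHit {B : ℕ} (σ : Fin B → ℝ) (τ : (Fin (B / 2) → Bool) → ℝ) : ℝ :=
  ∑ x : Fin B, ∑ t : Fin (B / 2) → Bool, if memT t x then σ x * τ t else 0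

/-- The joint distribution `σ × τ` conditioned on the event `s ∉ T(t)`. -/
noncomputable def condJoint {B : ℕ} (σ : Fin B → ℝ) (τ : (Fin (B / 2) → Bool) → ℝ)
    (x : Fin B) (t : Fin (B / 2) → Bool) : ℝ :=
  (if memT t x then 0 else σ x * τ t) /
    ∑ x' : Fin B, ∑ t' : Fin (B / 2) → Bool, if memT t' x' then 0 else σ x' * τ t'

/-- `H(s | t)`, in bits, under `σ × τ` conditioned on `s ∉ T(t)`:
`H(s | t) = ∑_t Pr[t] · H(s | t = t) = ∑_t ∑_x −p(x,t) · log₂ (p(x,t)/p(t))`. -/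
noncomputable def condEntS {B : ℕ} (σ : Fin B → ℝ) (τ : (Fin (B / 2) → Bool) → ℝ) : ℝ :=
  ∑ t : Fin (B / 2) → Bool, ∑ x : Fin B,
    -(condJoint σ τ x t) *
      Real.logb 2 (condJoint σ τ x t / ∑ x' : Fin B, condJoint σ τ x' t)

/-- `H(t | s)`, in bits, under `σ × τ` conditioned on `s ∉ T(t)`. -/
noncomputable def condEntT {B : ℕ} (σ : Fin B → ℝ) (τ : (Fin (B / 2) → Bool) → ℝ) : ℝ :=
  ∑ x : Fin B, ∑ t : Fin (B / 2) → Bool,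
    -(condJoint σ τ x t) *
      Real.logb 2 (condJoint σ τ x t / ∑ t' : Fin (B / 2) → Bool, condJoint σ τ x t')


/-!
Conditioned on `s ∉ T(t)`, the entropy `H(s | t)` is at most the cross entropy of the conditional
law of `s` given `t` against any subprobability `q_t` that is positive where that law is. Take
`q_t = 1/B` on the points of `S*` outside `T(t)` and `q_t = σ/2` on the other points outside
`T(t)`. Then a point of `S*` costs `log₂ B` bits and any other point at most
`1 + (1 - 7γ) log₂ B`. If `σ(S*) < 1/5`, the conditioned mass `α` of `S*` is below
`(1/5) / (41/42)`, and `(1 - γ) log₂ B ≤ α log₂ B + (1 - α)(1 + (1 - 7γ) log₂ B)` fails as soon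
as `γ log₂ B ≥ 1`.
-/

open Finset Real

theorem mul_log_div_le_sub {p a : ℝ} (hp : 0 < p) (ha : 0 < a) : p * log (a / p) ≤ a - p :=
  calc p * log (a / p) ≤ p * (a / p - 1) :=
        mul_le_mul_of_nonneg_left (log_le_sub_one_of_pos (by positivity)) hp.le
    _ = a - p := by field_simp

/-- Gibbs' inequality for a possibly unnormalised `p` against a subprobability `q`. -/
theorem sum_neg_mul_logb_div_sum_le {ι : Type*} [Fintype ι] (p q : ι → ℝ)
    (hp : ∀ i, 0 ≤ p i) (hq : ∀ i, 0 ≤ q i) (hq1 : ∑ i, q i ≤ 1) (hpq : ∀ i, 0 < p i → 0 < q i) :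
    ∑ i, -p i * logb 2 (p i / ∑ j, p j) ≤ ∑ i, -p i * logb 2 (q i) := by
  set S := ∑ j, p j
  have hS : 0 ≤ S := sum_nonneg fun i _ => hp i
  have term : ∀ i, -p i * logb 2 (p i / S) - -p i * logb 2 (q i) ≤ (q i * S - p i) / log 2 := by
    intro i
    rcases (hp i).eq_or_lt with h0 | h0
    · rw [← h0]
      simp only [neg_zero, zero_mul, sub_zero]
      exact div_nonneg (mul_nonneg (hq i) hS) (log_pos one_lt_two).le
    · have hqi := hpq i h0
      have hSpos : 0 < S := h0.trans_le (single_le_sum (fun j _ => hp j) (mem_univ i))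
      calc -p i * logb 2 (p i / S) - -p i * logb 2 (q i)
          = p i * log (q i * S / p i) / log 2 := by
            rw [logb, logb, log_div h0.ne' hSpos.ne', log_div (by positivity) h0.ne',
              log_mul hqi.ne' hSpos.ne']
            ring
        _ ≤ (q i * S - p i) / log 2 :=
            div_le_div_of_nonneg_right (mul_log_div_le_sub h0 (by positivity))
              (log_pos one_lt_two).le
  have hsum : ∑ i, (q i * S - p i) / log 2 ≤ 0 := by
    rw [← sum_div, sum_sub_distrib, ← sum_mul]
    exact div_nonpos_of_nonpos_of_nonneg (by nlinarith) (log_pos one_lt_two).le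
  linarith [sum_sub_distrib (s := univ) (fun i => -p i * logb 2 (p i / S))
    (fun i => -p i * logb 2 (q i)), sum_le_sum fun i (_ : i ∈ univ) => term i]

theorem card_filter_not_memT_le {B : ℕ} (hB : 2 ∣ B) (t : Fin (B / 2) → Bool) :
    #{x : Fin B | ¬ memT t x} ≤ B / 2 := by
  have half_lt : ∀ x : Fin B, (x : ℕ) / 2 < B / 2 := fun x => by omega
  -- `x ↦ x / 2` is injective off `T(t)`: `T(t)` already takes one point of each pair
  calc #{x : Fin B | ¬ memT t x} ≤ #(univ : Finset (Fin (B / 2))) := by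
        refine card_le_card_of_injOn (fun x => ⟨x / 2, half_lt x⟩) (fun _ _ => mem_univ _) ?_
        intro x hx y hy hxy
        simp only [coe_filter, mem_univ, true_and, Set.mem_ofPred_eq, memT, not_exists] at hx hy
        have hk := Fin.mk.inj_iff.mp hxy
        have hx' := hx ⟨x / 2, half_lt x⟩
        have hy' := hy ⟨x / 2, half_lt x⟩
        apply Fin.ext
        split_ifs at hx' hy' <;> simp only at hx' hy' <;> omega
    _ = B / 2 := card_fin _

section Conditioning

variable {B : ℕ} {σ : Fin B → ℝ} {τ : (Fin (B / 2) → Bool) → ℝ}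

noncomputable def prMiss (σ : Fin B → ℝ) (τ : (Fin (B / 2) → Bool) → ℝ) : ℝ :=
  ∑ x : Fin B, ∑ t : Fin (B / 2) → Bool, if memT t x then 0 else σ x * τ t

/-- The law of `s` under `σ × τ` conditioned on `s ∉ T(t)`. -/
noncomputable def condMarg (σ : Fin B → ℝ) (τ : (Fin (B / 2) → Bool) → ℝ) (x : Fin B) : ℝ :=
  ∑ t, condJoint σ τ x t

theorem prHit_add_prMiss (hσ1 : ∑ x, σ x = 1) (hτ1 : ∑ t, τ t = 1) :
    prHit σ τ + prMiss σ τ = 1 := by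
  have split : ∀ x t, ((if memT t x then σ x * τ t else 0) + if memT t x then 0 else σ x * τ t)
      = σ x * τ t := fun x t => by split_ifs <;> simp
  simp only [prHit, prMiss, ← sum_add_distrib, split, ← mul_sum, hσ1, hτ1, mul_one]

theorem condJoint_eq (x : Fin B) (t : Fin (B / 2) → Bool) :
    condJoint σ τ x t = (if memT t x then 0 else σ x * τ t) / prMiss σ τ := rfl

theorem condJoint_of_memT {x : Fin B} {t : Fin (B / 2) → Bool} (h : memT t x) :
    condJoint σ τ x t = 0 := by
  rw [condJoint_eq, if_pos h, zero_div]

theorem sum_condMarg (hZ : prMiss σ τ ≠ 0) : ∑ x, condMarg σ τ x = 1 := by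
  simp only [condMarg, condJoint_eq, ← sum_div]
  exact div_self hZ

variable (hσ0 : ∀ x, 0 ≤ σ x) (hτ0 : ∀ t, 0 ≤ τ t)
include hσ0 hτ0

theorem prMiss_nonneg : 0 ≤ prMiss σ τ :=
  sum_nonneg fun x _ => sum_nonneg fun t _ => by
    split_ifs
    exacts [le_rfl, mul_nonneg (hσ0 x) (hτ0 t)]

theorem condJoint_nonneg (x : Fin B) (t : Fin (B / 2) → Bool) : 0 ≤ condJoint σ τ x t := by
  rw [condJoint_eq]
  split_ifs
  exacts [by simp, div_nonneg (mul_nonneg (hσ0 x) (hτ0 t)) (prMiss_nonneg hσ0 hτ0)]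

theorem condMarg_le (hτ1 : ∑ t, τ t = 1) (hZ : 0 < prMiss σ τ) (x : Fin B) :
    condMarg σ τ x ≤ σ x / prMiss σ τ := by
  rw [condMarg, ← mul_one (σ x), ← hτ1, mul_sum, sum_div]
  refine sum_le_sum fun t _ => div_le_div_of_nonneg_right ?_ hZ.le
  split_ifs
  exacts [mul_nonneg (hσ0 x) (hτ0 t), le_rfl]

end Conditioning

section CrossEntropy

variable {B : ℕ} {σ : Fin B → ℝ} {τ : (Fin (B / 2) → Bool) → ℝ} {θ : ℝ}

/-- Uniform on the points of `{σ ≤ θ}` outside `T(t)` and `σ / 2` on the others: a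
subprobability, because at most `B / 2` points lie outside `T(t)`. -/
noncomputable def refDist (θ : ℝ) (σ : Fin B → ℝ) (t : Fin (B / 2) → Bool) (x : Fin B) : ℝ :=
  if memT t x then 0 else if σ x ≤ θ then (B : ℝ)⁻¹ else σ x / 2

theorem sum_refDist_le_one (hB : 2 ∣ B) (hσ0 : ∀ x, 0 ≤ σ x) (hσ1 : ∑ x, σ x = 1)
    (t : Fin (B / 2) → Bool) : ∑ x, refDist θ σ t x ≤ 1 := by
  have pointwise : ∀ x, refDist θ σ t x ≤ (if memT t x then 0 else (B : ℝ)⁻¹) + σ x / 2 := by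
    intro x
    unfold refDist
    split_ifs <;> linarith [hσ0 x, inv_nonneg.mpr (Nat.cast_nonneg (α := ℝ) B)]
  have uniform_part : ∑ x, (if memT t x then 0 else (B : ℝ)⁻¹) ≤ 1 / 2 := by
    rw [sum_ite, sum_const_zero, zero_add, sum_const, nsmul_eq_mul]
    calc (#{x : Fin B | ¬ memT t x} : ℝ) * (B : ℝ)⁻¹ ≤ ((B / 2 : ℕ) : ℝ) * (B : ℝ)⁻¹ := by
          gcongr
          exact_mod_cast card_filter_not_memT_le hB t
      _ ≤ (B / 2 : ℝ) * (B : ℝ)⁻¹ := by gcongr; exact Nat.cast_div_le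
      _ ≤ 1 / 2 := by
          rcases eq_or_ne (B : ℝ) 0 with h | h
          · simp [h]
          · rw [div_mul_eq_mul_div, mul_inv_cancel₀ h]
  calc ∑ x, refDist θ σ t x ≤ ∑ x, ((if memT t x then 0 else (B : ℝ)⁻¹) + σ x / 2) :=
        sum_le_sum fun x _ => pointwise x
    _ ≤ 1 := by rw [sum_add_distrib, ← sum_div, hσ1]; linarith

theorem neg_logb_refDist_le (hθ : 0 < θ) {t : Fin (B / 2) → Bool} {x : Fin B}
    (hx : ¬ memT t x) :
    -logb 2 (refDist θ σ t x) ≤ if σ x ≤ θ then logb 2 B else 1 - logb 2 θ := by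
  unfold refDist
  rw [if_neg hx]
  split_ifs with hsmall
  · rw [logb_inv, neg_neg]
  · have hσx : θ < σ x := not_le.mp hsmall
    rw [logb_div (hθ.trans hσx).ne' two_ne_zero, logb_self_eq_one one_lt_two]
    linarith [logb_le_logb_of_le (b := 2) one_lt_two hθ hσx.le]

theorem condEntS_le (hB : 2 ∣ B) (hσ0 : ∀ x, 0 ≤ σ x) (hσ1 : ∑ x, σ x = 1)
    (hτ0 : ∀ t, 0 ≤ τ t) (hθ : 0 < θ) :
    condEntS σ τ ≤
      ∑ x, condMarg σ τ x * if σ x ≤ θ then logb 2 B else 1 - logb 2 θ := by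
  calc condEntS σ τ
      ≤ ∑ t, ∑ x, -condJoint σ τ x t * logb 2 (refDist θ σ t x) := by
        refine sum_le_sum fun t _ => sum_neg_mul_logb_div_sum_le _ _
          (fun x => condJoint_nonneg hσ0 hτ0 x t) (fun x => ?_)
          (sum_refDist_le_one hB hσ0 hσ1 t) fun x hpos => ?_
        · unfold refDist
          split_ifs <;> first | positivity | linarith [hσ0 x]
        · have hx : ¬ memT t x := fun h => hpos.ne' (condJoint_of_memT h)
          unfold refDist
          rw [if_neg hx]
          split_ifs with hsmall
          · exact inv_pos.mpr (Nat.cast_pos.mpr x.pos)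
          · linarith [not_le.mp hsmall]
    _ ≤ ∑ t, ∑ x, condJoint σ τ x t * if σ x ≤ θ then logb 2 B else 1 - logb 2 θ := by
        refine sum_le_sum fun t _ => sum_le_sum fun x _ => ?_
        by_cases hx : memT t x
        · simp [condJoint_of_memT hx]
        · rw [neg_mul_comm]
          exact mul_le_mul_of_nonneg_left (neg_logb_refDist_le hθ hx)
            (condJoint_nonneg hσ0 hτ0 x t)
    _ = _ := by rw [sum_comm]; simp only [condMarg, sum_mul]

end CrossEntropy

theorem sum_mul_ite_of_sum_eq_one {ι : Type*} [Fintype ι] (m : ι → ℝ) (hm : ∑ i, m i = 1)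
    (P : ι → Prop) [DecidablePred P] (a b : ℝ) :
    ∑ i, m i * (if P i then a else b) = (∑ i with P i, m i) * a + (1 - ∑ i with P i, m i) * b := by
  rw [← hm, ← sum_filter_add_sum_filter_not univ P m, add_sub_cancel_left]
  simp only [mul_ite, sum_ite, sum_mul]

theorem stmt1 (γ : ℝ) (hγ : 0 < γ) :
    ∃ B₀ : ℕ, ∀ B : ℕ, B₀ ≤ B → 2 ∣ B →
      ∀ σ : Fin B → ℝ, (∀ x, 0 ≤ σ x) → (∑ x, σ x) = 1 →
      ∀ τ : (Fin (B / 2) → Bool) → ℝ, (∀ t, 0 ≤ τ t) → (∑ t, τ t) = 1 →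
      prHit σ τ ≤ 1 / 42 →
      (1 - γ) * Real.logb 2 (B : ℝ) ≤ condEntS σ τ →
      1 / 5 ≤ ∑ x : Fin B,
        if σ x ≤ (B : ℝ) ^ (7 * γ - 1) then σ x else 0 := by
  refine ⟨2 ^ ⌈1 / γ⌉₊, fun B hB hBeven σ hσ0 hσ1 τ hτ0 hτ1 hhit hent => ?_⟩
  by_contra! hsmall
  set L := logb 2 B
  set θ : ℝ := (B : ℝ) ^ (7 * γ - 1)
  have hB0 : (0 : ℝ) < B := by exact_mod_cast (Nat.one_le_two_pow).trans hB
  have hγL : 1 ≤ γ * L := by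
    have : (⌈1 / γ⌉₊ : ℝ) ≤ L :=
      calc (⌈1 / γ⌉₊ : ℝ) = logb 2 ((2 : ℝ) ^ ⌈1 / γ⌉₊) := by
            rw [logb_pow, logb_self_eq_one one_lt_two, mul_one]
        _ ≤ L := logb_le_logb_of_le one_lt_two (by positivity) (by exact_mod_cast hB)
    calc 1 = γ * (1 / γ) := by field_simp
      _ ≤ γ * L := by gcongr; exact (Nat.le_ceil _).trans this
  have hZ : 41 / 42 ≤ prMiss σ τ := by linarith [prHit_add_prMiss hσ1 hτ1]
  set α := ∑ x with σ x ≤ θ, condMarg σ τ x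
  have hα : α < 42 / 205 :=
    calc α ≤ ∑ x with σ x ≤ θ, σ x / prMiss σ τ :=
          sum_le_sum fun x _ => condMarg_le hσ0 hτ0 hτ1 (by linarith) x
      _ = (∑ x, if σ x ≤ θ then σ x else 0) / prMiss σ τ := by rw [← sum_div, sum_filter]
      _ < (1 / 5) / (41 / 42) := by gcongr
      _ = 42 / 205 := by norm_num
  have hbound := hent.trans (condEntS_le hBeven hσ0 hσ1 hτ0 (rpow_pos_of_pos hB0 (7 * γ - 1)))
  rw [sum_mul_ite_of_sum_eq_one _ (sum_condMarg (by linarith)),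
    logb_rpow_eq_mul_logb_of_pos hB0] at hbound
  -- rearranged: `(1 - α) (7 γ L - 1) ≤ γ L`, impossible once `γ L ≥ 1` and `α < 42 / 205`
  nlinarith [mul_le_mul_of_nonneg_right hα.le (by linarith : (0 : ℝ) ≤ 7 * (γ * L) - 1)]
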